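/- arXiv:math/0506124 — 2 statements merged into one kernel-verified Lean document; each statement's English description precedes it below -/
import Mathlib

section
/- The Jacobian of κ(λ) = (1/e) L(exp(−L*(λ))) is ∇κ|_λ(δ) = −(1/e) L(M_{exp(−L*(λ))}(L*(δ))), where M_C(Δ) = ∫₀¹ C^{1−t} Δ C^{t} dt, and this Jacobian is self-adjoint and negative semidefinite: ⟨δ, ∇κ|_λ(δ)⟩ = −(1/e)∫₀¹ trace((A^{t/2} L*(δ) A^{(1−t)/2})(A^{(1−t)/2} L*(δ) A^{t/2})) dt ≤ 0 with A = exp(−L*(λ)), with equality iff L*(δ) = 0. -/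
open scoped ComplexOrder
open Matrix

/-- The real-linear map `L : ρ ↦ Σ_k G_left k * ρ * G_right k`. -/
noncomputable def Lmap {N p q m : ℕ} (Gl : Fin N → Matrix (Fin p) (Fin m) ℂ)
    (Gr : Fin N → Matrix (Fin m) (Fin q) ℂ) (ρ : Matrix (Fin m) (Fin m) ℂ) :
    Matrix (Fin p) (Fin q) ℂ :=
  ∑ k, Gl k * ρ * Gr k

/-- The claimed adjoint `L* : λ ↦ (Σ_k (G_left k)* λ (G_right k)*)_Herm`,
where `(M)_Herm = (M + M*)/2`. -/
noncomputable def Lstar {N p q m : ℕ} (Gl : Fin N → Matrix (Fin p) (Fin m) ℂ)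
    (Gr : Fin N → Matrix (Fin m) (Fin q) ℂ) (lam : Matrix (Fin p) (Fin q) ℂ) :
    Matrix (Fin m) (Fin m) ℂ :=
  ((1 : ℂ) / 2) • ((∑ k, (Gl k)ᴴ * lam * (Gr k)ᴴ) + (∑ k, (Gl k)ᴴ * lam * (Gr k)ᴴ)ᴴ)


open MeasureTheory

/-- The scrambled multiplication `M_{e^{-H}}(Δ) = ∫₀¹ e^{-(1-t)H} Δ e^{-tH} dt`
for a Hermitian `H` (defined spectrally), applied entrywise. -/
noncomputable def Mexp {m : ℕ} {H : Matrix (Fin m) (Fin m) ℂ} (hH : H.IsHermitian)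
    (Δ : Matrix (Fin m) (Fin m) ℂ) : Matrix (Fin m) (Fin m) ℂ :=
  Matrix.of fun i j =>
    ∫ t in (0 : ℝ)..1,
      ((hH.cfc fun x => Real.exp (-((1 - t) * x))) * Δ *
        (hH.cfc fun x => Real.exp (-(t * x)))) i j

/-- The Jacobian `∇κ|_λ(δ) = −(1/e) L(M_{exp(−L*(λ))}(L*(δ)))` of
`κ(λ) = (1/e) L(exp(−L*(λ)))`. -/
noncomputable def gradKappa {N p q m : ℕ} (Gl : Fin N → Matrix (Fin p) (Fin m) ℂ)
    (Gr : Fin N → Matrix (Fin m) (Fin q) ℂ) {lam : Matrix (Fin p) (Fin q) ℂ}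
    (hH : (Lstar Gl Gr lam).IsHermitian) (δ : Matrix (Fin p) (Fin q) ℂ) :
    Matrix (Fin p) (Fin q) ℂ :=
  ((-(1 / Real.exp 1) : ℝ) : ℂ) • Lmap Gl Gr (Mexp hH (Lstar Gl Gr δ))

/-! With `A = exp (-H)`, `H = L*(λ)` and `X = L*(δ)`, adjointness of `L` and `L*` turns
`⟨δ₁, ∇κ(δ)⟩` into `-(1/e) ∫₀¹ Re tr (L*(δ₁) A^{1-t} X A^t) dt`. The substitution `t ↦ 1 - t`
together with cyclicity of the trace makes this symmetric in `δ₁, δ`. For `δ₁ = δ`, splitting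
`A^t = A^{t/2} A^{t/2}` writes the integrand as `Re tr (B Bᴴ)` with `B = A^{t/2} X A^{(1-t)/2}`,
which is nonnegative and vanishes only when `B = 0`, i.e. `X = 0`, the powers of `A` being
invertible. -/

namespace Matrix.IsHermitian

variable {n 𝕜 : Type*} [Fintype n] [DecidableEq n] [RCLike 𝕜] {H : Matrix n n 𝕜}
  (hH : H.IsHermitian)

/-- The power `A ^ s` of `A = exp (-H)`. -/
noncomputable def expNegSMul (s : ℝ) : Matrix n n 𝕜 :=
  hH.cfc fun x => Real.exp (-(s * x))

theorem expNegSMul_mul_expNegSMul (s r : ℝ) :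
    hH.expNegSMul s * hH.expNegSMul r = hH.expNegSMul (s + r) := by
  simp only [expNegSMul, ← hH.cfc_eq]
  rw [← cfc_mul (fun x => Real.exp (-(s * x))) (fun x => Real.exp (-(r * x))) H]
  congr! 2 with x
  rw [← Real.exp_add]
  ring_nf

theorem expNegSMul_zero : hH.expNegSMul 0 = (1 : Matrix n n 𝕜) := by
  simp only [expNegSMul, zero_mul, neg_zero, Real.exp_zero, ← hH.cfc_eq]
  exact cfc_const_one ℝ H

theorem expNegSMul_isHermitian (s : ℝ) : (hH.expNegSMul s).IsHermitian := by
  rw [expNegSMul, ← hH.cfc_eq]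
  exact cfc_predicate _ H

theorem conjTranspose_expNegSMul_mul_mul_expNegSMul {X : Matrix n n 𝕜} (hX : X.IsHermitian)
    (s r : ℝ) :
    (hH.expNegSMul s * X * hH.expNegSMul r)ᴴ = hH.expNegSMul r * X * hH.expNegSMul s := by
  rw [conjTranspose_mul, conjTranspose_mul, hX.eq, (hH.expNegSMul_isHermitian _).eq,
    (hH.expNegSMul_isHermitian _).eq, Matrix.mul_assoc]

theorem expNegSMul_mul_mul_expNegSMul_eq_zero_iff (s r : ℝ) (X : Matrix n n 𝕜) :
    hH.expNegSMul s * X * hH.expNegSMul r = 0 ↔ X = 0 := by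
  refine ⟨fun h => ?_, fun h => by rw [h, Matrix.mul_zero, Matrix.zero_mul]⟩
  calc X = hH.expNegSMul (-s + s) * X * hH.expNegSMul (r + -r) := by
          rw [neg_add_cancel, add_neg_cancel, expNegSMul_zero, Matrix.one_mul, Matrix.mul_one]
    _ = hH.expNegSMul (-s) * (hH.expNegSMul s * X * hH.expNegSMul r) * hH.expNegSMul (-r) := by
          simp only [← expNegSMul_mul_expNegSMul, Matrix.mul_assoc]
    _ = 0 := by rw [h, Matrix.mul_zero, Matrix.zero_mul]

@[fun_prop]
theorem continuous_expNegSMul : Continuous hH.expNegSMul := by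
  unfold expNegSMul Matrix.IsHermitian.cfc
  simp only [Unitary.conjStarAlgAut_apply]
  fun_prop

end Matrix.IsHermitian

section IntervalIntegral

open intervalIntegral

variable {n : Type*}

theorem intervalIntegral_comp_one_sub {E : Type*} [NormedAddCommGroup E] [NormedSpace ℝ E]
    (f : ℝ → E) : ∫ t in (0 : ℝ)..1, f (1 - t) = ∫ t in (0 : ℝ)..1, f t := by
  simp [integral_comp_sub_left f (1 : ℝ) (a := 0) (b := 1)]

theorem Matrix.conjTranspose_of_intervalIntegral (P : ℝ → Matrix n n ℂ) (a b : ℝ) :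
    (of fun i j => ∫ t in a..b, P t i j)ᴴ = of fun i j => ∫ t in a..b, (P t)ᴴ i j := by
  ext i j
  simp [intervalIntegral_conj]

theorem Matrix.trace_mul_of_intervalIntegral [Fintype n] {P : ℝ → Matrix n n ℂ}
    (hP : Continuous P) (Z : Matrix n n ℂ) (a b : ℝ) :
    (Z * of fun i j => ∫ t in a..b, P t i j).trace = ∫ t in a..b, (Z * P t).trace := by
  have hcont : ∀ i j, Continuous fun t => Z i j * P t j i := fun i j =>
    continuous_const.mul ((continuous_apply_apply j i).comp hP)
  simp only [trace, diag, mul_apply, of_apply, ← intervalIntegral.integral_const_mul]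
  rw [integral_finsetSum fun i _ =>
    (continuous_finsetSum _ fun j _ => hcont i j).intervalIntegrable a b]
  exact Finset.sum_congr rfl fun i _ =>
    (integral_finsetSum fun j _ => (hcont i j).intervalIntegrable a b).symm

end IntervalIntegral

namespace Matrix

variable {m n : Type*} [Fintype m] [Fintype n]

theorem re_trace_conjTranspose_mul (M N : Matrix m n ℂ) :
    (Mᴴ * N).trace.re = (Nᴴ * M).trace.re := by
  rw [← conjTranspose_conjTranspose (Mᴴ * N), trace_conjTranspose, conjTranspose_mul,
    conjTranspose_conjTranspose, Complex.star_def, Complex.conj_re]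

theorem trace_mul_mul_mul_comm (Y A X B : Matrix n n ℂ) :
    (Y * (A * X * B)).trace = (X * (B * Y * A)).trace := by
  simpa only [Matrix.mul_assoc] using trace_mul_comm (Y * A) (X * B)

theorem re_trace_mul_conjTranspose_self_nonneg (B : Matrix m n ℂ) :
    0 ≤ (B * Bᴴ).trace.re :=
  (Complex.nonneg_iff.mp (posSemidef_self_mul_conjTranspose B).trace_nonneg).1

theorem re_trace_mul_conjTranspose_self_pos {B : Matrix m n ℂ} (hB : B ≠ 0) :
    0 < (B * Bᴴ).trace.re :=
  (Complex.pos_iff.mp (lt_of_le_of_ne (posSemidef_self_mul_conjTranspose B).trace_nonneg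
    (Ne.symm (trace_mul_conjTranspose_self_eq_zero_iff.not.mpr hB)))).1

end Matrix

section Mexp

open intervalIntegral

variable {m : ℕ} {H : Matrix (Fin m) (Fin m) ℂ} (hH : H.IsHermitian)

theorem Mexp_eq_expNegSMul (X : Matrix (Fin m) (Fin m) ℂ) :
    Mexp hH X = of fun i j => ∫ t in (0 : ℝ)..1,
      (hH.expNegSMul (1 - t) * X * hH.expNegSMul t) i j :=
  rfl

theorem isHermitian_Mexp {X : Matrix (Fin m) (Fin m) ℂ} (hX : X.IsHermitian) :
    (Mexp hH X).IsHermitian := by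
  rw [IsHermitian, Mexp_eq_expNegSMul, conjTranspose_of_intervalIntegral]
  ext i j
  rw [of_apply, of_apply, ← intervalIntegral_comp_one_sub]
  refine integral_congr fun t _ => ?_
  rw [sub_sub_cancel, hH.conjTranspose_expNegSMul_mul_mul_expNegSMul hX]

theorem re_trace_mul_Mexp (Y X : Matrix (Fin m) (Fin m) ℂ) :
    (Y * Mexp hH X).trace.re =
      ∫ t in (0 : ℝ)..1, (Y * (hH.expNegSMul (1 - t) * X * hH.expNegSMul t)).trace.re := by
  have hcont : Continuous fun t => Y * (hH.expNegSMul (1 - t) * X * hH.expNegSMul t) := by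
    fun_prop
  rw [Mexp_eq_expNegSMul, trace_mul_of_intervalIntegral (by fun_prop),
    ← RCLike.re_to_complex, ← intervalIntegral_re (hcont.matrix_trace.intervalIntegrable 0 1)]
  rfl

theorem re_trace_mul_Mexp_comm (Y X : Matrix (Fin m) (Fin m) ℂ) :
    (Y * Mexp hH X).trace.re = (X * Mexp hH Y).trace.re := by
  rw [re_trace_mul_Mexp, re_trace_mul_Mexp, ← intervalIntegral_comp_one_sub]
  refine integral_congr fun t _ => ?_
  rw [sub_sub_cancel, trace_mul_mul_mul_comm]

theorem re_trace_mul_Mexp_self (X : Matrix (Fin m) (Fin m) ℂ) :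
    (X * Mexp hH X).trace.re = ∫ t in (0 : ℝ)..1,
      ((hH.expNegSMul (t / 2) * X * hH.expNegSMul ((1 - t) / 2)) *
        (hH.expNegSMul ((1 - t) / 2) * X * hH.expNegSMul (t / 2))).trace.re := by
  have half (s : ℝ) : hH.expNegSMul (s / 2) * hH.expNegSMul (s / 2) = hH.expNegSMul s := by
    rw [hH.expNegSMul_mul_expNegSMul, add_halves]
  rw [re_trace_mul_Mexp]
  refine integral_congr fun t _ => ?_
  rw [← half t, ← half (1 - t)]
  congr 1
  simpa only [Matrix.mul_assoc] using
    (trace_mul_comm (hH.expNegSMul (t / 2)) (X * hH.expNegSMul ((1 - t) / 2) *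
      hH.expNegSMul ((1 - t) / 2) * X * hH.expNegSMul (t / 2))).symm

theorem re_trace_mul_Mexp_self_nonneg {X : Matrix (Fin m) (Fin m) ℂ} (hX : X.IsHermitian) :
    0 ≤ (X * Mexp hH X).trace.re := by
  rw [re_trace_mul_Mexp_self]
  refine integral_nonneg zero_le_one fun t _ => ?_
  rw [← hH.conjTranspose_expNegSMul_mul_mul_expNegSMul hX (t / 2) ((1 - t) / 2)]
  exact re_trace_mul_conjTranspose_self_nonneg _

theorem re_trace_mul_Mexp_self_pos {X : Matrix (Fin m) (Fin m) ℂ} (hX : X.IsHermitian)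
    (hX₀ : X ≠ 0) : 0 < (X * Mexp hH X).trace.re := by
  rw [re_trace_mul_Mexp_self]
  refine intervalIntegral_pos_of_pos_on (Continuous.intervalIntegrable (by fun_prop) 0 1)
    (fun t _ => ?_) zero_lt_one
  rw [← hH.conjTranspose_expNegSMul_mul_mul_expNegSMul hX (t / 2) ((1 - t) / 2)]
  exact re_trace_mul_conjTranspose_self_pos
    ((hH.expNegSMul_mul_mul_expNegSMul_eq_zero_iff _ _ X).not.mpr hX₀)

theorem re_trace_mul_Mexp_self_eq_zero_iff {X : Matrix (Fin m) (Fin m) ℂ}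
    (hX : X.IsHermitian) : (X * Mexp hH X).trace.re = 0 ↔ X = 0 := by
  refine ⟨fun h => ?_, fun h => by simp [h]⟩
  by_contra hX₀
  exact (re_trace_mul_Mexp_self_pos hH hX hX₀).ne' h

end Mexp

section Lmap

variable {N p q m : ℕ} (Gl : Fin N → Matrix (Fin p) (Fin m) ℂ)
  (Gr : Fin N → Matrix (Fin m) (Fin q) ℂ)

theorem isHermitian_Lstar (δ : Matrix (Fin p) (Fin q) ℂ) : (Lstar Gl Gr δ).IsHermitian := by
  rw [IsHermitian, Lstar, conjTranspose_smul, conjTranspose_add, conjTranspose_conjTranspose,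
    add_comm]
  norm_num

theorem trace_conjTranspose_mul_Lmap (δ : Matrix (Fin p) (Fin q) ℂ)
    (W : Matrix (Fin m) (Fin m) ℂ) :
    (δᴴ * Lmap Gl Gr W).trace = ((∑ k, (Gl k)ᴴ * δ * (Gr k)ᴴ)ᴴ * W).trace := by
  simp only [Lmap, conjTranspose_sum, Matrix.mul_sum, Matrix.sum_mul, trace_sum,
    conjTranspose_mul, conjTranspose_conjTranspose]
  refine Finset.sum_congr rfl fun k _ => ?_
  simpa only [Matrix.mul_assoc] using trace_mul_comm (δᴴ * Gl k * W) (Gr k)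

theorem re_trace_conjTranspose_mul_Lmap (δ : Matrix (Fin p) (Fin q) ℂ)
    {W : Matrix (Fin m) (Fin m) ℂ} (hW : W.IsHermitian) :
    (δᴴ * Lmap Gl Gr W).trace.re = (Lstar Gl Gr δ * W).trace.re := by
  set S := ∑ k, (Gl k)ᴴ * δ * (Gr k)ᴴ
  have hS : (S * W).trace.re = (Sᴴ * W).trace.re := by
    rw [← conjTranspose_conjTranspose S, re_trace_conjTranspose_mul, hW.eq, trace_mul_comm,
      conjTranspose_conjTranspose]
  rw [trace_conjTranspose_mul_Lmap, Lstar, smul_mul, Matrix.add_mul, trace_smul, trace_add,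
    smul_eq_mul, Complex.mul_re, Complex.add_re, hS]
  norm_num
  ring

variable {lam : Matrix (Fin p) (Fin q) ℂ} (hH : (Lstar Gl Gr lam).IsHermitian)

theorem re_trace_conjTranspose_mul_gradKappa (δ₁ δ : Matrix (Fin p) (Fin q) ℂ) :
    (δ₁ᴴ * gradKappa Gl Gr hH δ).trace.re =
      -(1 / Real.exp 1) * (Lstar Gl Gr δ₁ * Mexp hH (Lstar Gl Gr δ)).trace.re := by
  rw [gradKappa, Matrix.mul_smul, trace_smul, smul_eq_mul, Complex.re_ofReal_mul,
    re_trace_conjTranspose_mul_Lmap _ _ _ (isHermitian_Mexp hH (isHermitian_Lstar Gl Gr δ))]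

end Lmap

/-- the Jacobian `∇κ|_λ` is self-adjoint and negative semidefinite:
`⟨δ, ∇κ|_λ(δ)⟩ = −(1/e)∫₀¹ trace((A^{t/2} L*(δ) A^{(1−t)/2})(A^{(1−t)/2} L*(δ) A^{t/2})) dt ≤ 0`
with `A = exp(−L*(λ))`, with equality iff `L*(δ) = 0`. -/
theorem gradKappa_selfAdjoint_negSemidef {N p q m : ℕ}
    (Gl : Fin N → Matrix (Fin p) (Fin m) ℂ) (Gr : Fin N → Matrix (Fin m) (Fin q) ℂ)
    (lam : Matrix (Fin p) (Fin q) ℂ) (hH : (Lstar Gl Gr lam).IsHermitian) :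
    (∀ δ δ₁ : Matrix (Fin p) (Fin q) ℂ,
        ((δ₁ᴴ * gradKappa Gl Gr hH δ).trace).re =
          (((gradKappa Gl Gr hH δ₁)ᴴ * δ).trace).re) ∧
    (∀ δ : Matrix (Fin p) (Fin q) ℂ,
        ((δᴴ * gradKappa Gl Gr hH δ).trace).re =
          -(1 / Real.exp 1) *
            ∫ t in (0 : ℝ)..1,
              ((((hH.cfc fun x => Real.exp (-(t / 2 * x))) * Lstar Gl Gr δ *
                    (hH.cfc fun x => Real.exp (-((1 - t) / 2 * x)))) *
                  ((hH.cfc fun x => Real.exp (-((1 - t) / 2 * x))) * Lstar Gl Gr δ *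
                    (hH.cfc fun x => Real.exp (-(t / 2 * x))))).trace).re) ∧
    (∀ δ : Matrix (Fin p) (Fin q) ℂ,
        ((δᴴ * gradKappa Gl Gr hH δ).trace).re ≤ 0 ∧
          (((δᴴ * gradKappa Gl Gr hH δ).trace).re = 0 ↔ Lstar Gl Gr δ = 0)) := by
  have hL := isHermitian_Lstar Gl Gr
  refine ⟨fun δ δ₁ => ?_, fun δ => ?_, fun δ => ⟨?_, ?_⟩⟩
  · rw [re_trace_conjTranspose_mul (gradKappa Gl Gr hH δ₁),
      re_trace_conjTranspose_mul_gradKappa, re_trace_conjTranspose_mul_gradKappa,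
      re_trace_mul_Mexp_comm]
  · rw [re_trace_conjTranspose_mul_gradKappa, re_trace_mul_Mexp_self]
    rfl
  · rw [re_trace_conjTranspose_mul_gradKappa]
    exact mul_nonpos_of_nonpos_of_nonneg (neg_nonpos.mpr (by positivity))
      (re_trace_mul_Mexp_self_nonneg hH (hL δ))
  · rw [re_trace_conjTranspose_mul_gradKappa, mul_eq_zero,
      re_trace_mul_Mexp_self_eq_zero_iff hH (hL δ)]
    simp [(Real.exp_pos 1).ne']
end

section
/- Suppose ρ̂ = (1/e) exp(−L*(λ)) for some λ ∈ ℂ^{p×q}, and L(ρ̂) = R. Then ρ̂ is the unique minimizer of ρ ↦ trace(ρ log ρ) over all Hermitian positive definite ρ with L(ρ) = R. -/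
open scoped ComplexOrder
open Matrix

open NormedSpace

/-- `ρ ↦ trace (ρ log ρ)` (via the spectral matrix logarithm), extended by junk
off the Hermitian matrices. -/
noncomputable def traceRhoLogRho {m : ℕ} (ρ : Matrix (Fin m) (Fin m) ℂ) : ℝ :=
  if h : ρ.IsHermitian then ((ρ * h.cfc Real.log).trace).re else 0

/-!
Write `H = -L*(λ)`, a Hermitian matrix, so that `ρ̂ = exp (H - 1)` is positive definite with
`log ρ̂ = H - 1`. For a feasible `ρ`, `ρ - ρ̂` lies in the kernel of `L` and is therefore
trace-orthogonal to the range of `L*`; hence `tr (ρ H) = tr (ρ̂ H)`, i.e.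
`tr (ρ log ρ̂) - tr ρ = tr (ρ̂ log ρ̂) - tr ρ̂`. Klein's inequality
`tr (ρ log ρ̂) + tr ρ - tr ρ̂ < tr (ρ log ρ)` for `ρ ≠ ρ̂` then gives the claim.

Klein's inequality itself: with eigenpairs `(aᵢ, uᵢ)` of `A` and `(bⱼ, vⱼ)` of `B`, the gap equals
`∑ᵢⱼ |⟪uᵢ, vⱼ⟫|² bⱼ klFun (aᵢ / bⱼ)`, where `klFun x = x log x + 1 - x ≥ 0` vanishes only at
`x = 1`; if every term vanishes, `A` and `B` act identically on each `vⱼ`.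
-/

lemma InformationTheory.mul_klFun_div {x y : ℝ} (hx : 0 < x) (hy : 0 < y) :
    y * klFun (x / y) = x * Real.log x - x * Real.log y - x + y := by
  rw [klFun_apply, Real.log_div hx.ne' hy.ne']
  field_simp
  ring

namespace Matrix

variable {n 𝕜 : Type*} [Fintype n] [DecidableEq n] [RCLike 𝕜]

lemma trace_conj_diagonal_mul_conj_diagonal (U V : Matrix n n 𝕜) (a b : n → ℝ) :
    (U * diagonal (RCLike.ofReal ∘ a) * star U * (V * diagonal (RCLike.ofReal ∘ b) * star V)).trace
      = ((∑ i, ∑ j, a i * b j * ‖(star U * V) i j‖ ^ 2 : ℝ) : 𝕜) := by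
  set W := star U * V
  have hcycle : (U * diagonal (RCLike.ofReal ∘ a) * star U
      * (V * diagonal (RCLike.ofReal ∘ b) * star V)).trace
      = (diagonal (RCLike.ofReal ∘ a) * W * diagonal (RCLike.ofReal ∘ b) * star W).trace := by
    simp only [W, star_mul, star_star, mul_assoc]
    rw [trace_mul_comm U]
    simp only [mul_assoc]
  rw [hcycle]
  simp only [trace, diag_apply, mul_apply, diagonal_apply, star_apply, RCLike.star_def,
    Function.comp_apply, ite_mul, zero_mul, mul_ite, mul_zero, Finset.sum_ite_eq,
    Finset.sum_ite_eq', Finset.mem_univ, if_true]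
  push_cast
  refine Finset.sum_congr rfl fun i _ => Finset.sum_congr rfl fun j _ => ?_
  rw [← RCLike.mul_conj]
  ring

namespace IsHermitian

variable {A B : Matrix n n 𝕜} (hA : A.IsHermitian) (hB : B.IsHermitian)

lemma cfc_id : hA.cfc id = A := hA.spectral_theorem.symm

lemma cfc_one : hA.cfc 1 = 1 := by
  simp [IsHermitian.cfc, Function.comp_def]

lemma cfc_mul (f g : ℝ → ℝ) : hA.cfc (f * g) = hA.cfc f * hA.cfc g := by
  simp only [IsHermitian.cfc, ← map_mul, diagonal_mul_diagonal]
  congr 2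
  ext i
  simp

lemma re_trace_cfc_mul_cfc (f g : ℝ → ℝ) :
    RCLike.re (hA.cfc f * hB.cfc g).trace = ∑ i, ∑ j, f (hA.eigenvalues i) * g (hB.eigenvalues j)
      * ‖(star (hA.eigenvectorUnitary : Matrix n n 𝕜) * hB.eigenvectorUnitary) i j‖ ^ 2 := by
  rw [IsHermitian.cfc, IsHermitian.cfc, Unitary.conjStarAlgAut_apply,
    Unitary.conjStarAlgAut_apply, trace_conj_diagonal_mul_conj_diagonal, RCLike.ofReal_re]
  rfl

lemma eq_of_eigenvalues_eq_of_ne_zero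
    (h : ∀ i j, (star (hA.eigenvectorUnitary : Matrix n n 𝕜) * hB.eigenvectorUnitary) i j ≠ 0 →
      hA.eigenvalues i = hB.eigenvalues j) : A = B := by
  set U : Matrix n n 𝕜 := ↑hA.eigenvectorUnitary
  set V : Matrix n n 𝕜 := ↑hB.eigenvectorUnitary
  set W := star U * V
  have hW : W * star W = 1 := mem_unitaryGroup_iff.mp <|
    mul_mem (Unitary.star_mem hA.eigenvectorUnitary.2) hB.eigenvectorUnitary.2
  have hV : V = U * W := by
    rw [← mul_assoc, Unitary.mul_star_self_of_mem hA.eigenvectorUnitary.2, one_mul]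
  have hcomm : diagonal (RCLike.ofReal ∘ hA.eigenvalues) * W
      = W * diagonal (RCLike.ofReal ∘ hB.eigenvalues) := by
    ext i j
    rw [diagonal_mul, mul_diagonal]
    by_cases hij : W i j = 0
    · simp [hij]
    · simp [h i j hij, mul_comm]
  rw [← hA.cfc_id, ← hB.cfc_id, IsHermitian.cfc, IsHermitian.cfc, Unitary.conjStarAlgAut_apply,
    Unitary.conjStarAlgAut_apply]
  change U * _ * star U = V * _ * star V
  rw [Function.id_comp, Function.id_comp, hV, star_mul, mul_assoc U W, ← hcomm]
  simp only [mul_assoc, ← mul_assoc W, hW, one_mul]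

end IsHermitian

open InformationTheory in
lemma PosDef.re_trace_log_sub_eq_sum_klFun {A B : Matrix n n 𝕜} (hA : A.PosDef) (hB : B.PosDef) :
    RCLike.re (A * hA.isHermitian.cfc Real.log).trace
        - RCLike.re (A * hB.isHermitian.cfc Real.log).trace - RCLike.re A.trace + RCLike.re B.trace
      = ∑ i, ∑ j, ‖(star (hA.isHermitian.eigenvectorUnitary : Matrix n n 𝕜)
          * hB.isHermitian.eigenvectorUnitary) i j‖ ^ 2
          * (hB.isHermitian.eigenvalues j
            * klFun (hA.isHermitian.eigenvalues i / hB.isHermitian.eigenvalues j)) := by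
  have hA' := hA.isHermitian
  have hB' := hB.isHermitian
  -- Each trace becomes `tr (hA'.cfc f * hB'.cfc g)`; `cfc 1 = 1` hides the row and column sums.
  have hAlogA : A * hA'.cfc Real.log = hA'.cfc (id * Real.log) * hB'.cfc 1 := by
    rw [hB'.cfc_one, mul_one, hA'.cfc_mul, hA'.cfc_id]
  have hAlogB : A * hB'.cfc Real.log = hA'.cfc id * hB'.cfc Real.log := by rw [hA'.cfc_id]
  have htrA : A.trace = (hA'.cfc id * hB'.cfc 1).trace := by rw [hB'.cfc_one, mul_one, hA'.cfc_id]
  have htrB : B.trace = (hA'.cfc 1 * hB'.cfc id).trace := by rw [hA'.cfc_one, one_mul, hB'.cfc_id]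
  rw [hAlogA, hAlogB, htrA, htrB]
  simp only [hA'.re_trace_cfc_mul_cfc hB', ← Finset.sum_sub_distrib, ← Finset.sum_add_distrib]
  refine Finset.sum_congr rfl fun i _ => Finset.sum_congr rfl fun j _ => ?_
  rw [mul_klFun_div (hA.eigenvalues_pos i) (hB.eigenvalues_pos j)]
  simp only [Pi.mul_apply, id_eq, Pi.one_apply, mul_one, one_mul]
  ring

open InformationTheory in
theorem PosDef.klein_inequality {A B : Matrix n n 𝕜} (hA : A.PosDef) (hB : B.PosDef)
    (hne : A ≠ B) :
    RCLike.re (A * hB.isHermitian.cfc Real.log).trace + RCLike.re A.trace - RCLike.re B.trace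
      < RCLike.re (A * hA.isHermitian.cfc Real.log).trace := by
  have hA' := hA.isHermitian
  have hB' := hB.isHermitian
  set W := star (hA'.eigenvectorUnitary : Matrix n n 𝕜) * hB'.eigenvectorUnitary
  set t : n → n → ℝ := fun i j =>
    ‖W i j‖ ^ 2 * (hB'.eigenvalues j * klFun (hA'.eigenvalues i / hB'.eigenvalues j))
  have ht : ∀ i j, 0 ≤ t i j := fun i j =>
    mul_nonneg (sq_nonneg _) (mul_nonneg (hB.eigenvalues_pos j).le
      (klFun_nonneg (div_nonneg (hA.eigenvalues_pos i).le (hB.eigenvalues_pos j).le)))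
  have hrow : ∀ i, 0 ≤ ∑ j, t i j := fun i => Finset.sum_nonneg fun j _ => ht i j
  have hpos : 0 < ∑ i, ∑ j, t i j := by
    refine (Finset.sum_nonneg fun i _ => hrow i).lt_of_ne fun h0 => hne ?_
    refine hA'.eq_of_eigenvalues_eq_of_ne_zero hB' fun i j hWij => ?_
    have htij : t i j = 0 := (Finset.sum_eq_zero_iff_of_nonneg fun j _ => ht i j).mp
      ((Finset.sum_eq_zero_iff_of_nonneg fun i _ => hrow i).mp h0.symm i (Finset.mem_univ i))
      j (Finset.mem_univ j)
    have hb := hB.eigenvalues_pos j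
    simp only [t, mul_eq_zero, pow_eq_zero_iff two_ne_zero, norm_eq_zero, hb.ne', false_or,
      klFun_eq_zero_iff (div_nonneg (hA.eigenvalues_pos i).le hb.le),
      div_eq_one_iff_eq hb.ne'] at htij
    exact htij.resolve_left hWij
  linarith [hA.re_trace_log_sub_eq_sum_klFun hB]

lemma exp_sub_one (A : Matrix n n ℂ) :
    NormedSpace.exp (A - 1) = (((Real.exp 1)⁻¹ : ℝ) : ℂ) • NormedSpace.exp A := by
  open scoped Matrix.Norms.L2Operator in
  rw [sub_eq_add_neg, exp_add_of_commute A _ (Commute.one_right A).neg_right,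
    ← map_one (algebraMap ℂ (Matrix n n ℂ)), ← map_neg, ← algebraMap_exp_comm,
    ← Algebra.commutes, ← Algebra.smul_def, ← Real.exp_neg, Complex.ofReal_exp]
  push_cast
  rw [Complex.exp_eq_exp_ℂ]

lemma IsHermitian.posDef_exp {H : Matrix n n ℂ} (hH : H.IsHermitian) :
    (NormedSpace.exp H).PosDef := by
  open scoped Matrix.Norms.L2Operator MatrixOrder in
  exact isStrictlyPositive_iff_posDef.mp
    ((isUnit_exp H).isStrictlyPositive hH.isSelfAdjoint.exp_nonneg)

lemma IsHermitian.cfc_log_exp {H : Matrix n n ℂ} (hH : H.IsHermitian)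
    (hexp : (NormedSpace.exp H).IsHermitian) : hexp.cfc Real.log = H := by
  open scoped Matrix.Norms.L2Operator in
  rw [← hexp.cfc_eq]
  exact CFC.log_exp H hH.isSelfAdjoint

end Matrix

section

variable {N p q m : ℕ} (Gl : Fin N → Matrix (Fin p) (Fin m) ℂ)
  (Gr : Fin N → Matrix (Fin m) (Fin q) ℂ)

lemma Lmap_sub (X Y : Matrix (Fin m) (Fin m) ℂ) :
    Lmap Gl Gr (X - Y) = Lmap Gl Gr X - Lmap Gl Gr Y := by
  simp only [Lmap, Matrix.mul_sub, Matrix.sub_mul, Finset.sum_sub_distrib]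

lemma Lstar_isHermitian (lam : Matrix (Fin p) (Fin q) ℂ) : (Lstar Gl Gr lam).IsHermitian := by
  rw [Lstar, IsHermitian, conjTranspose_smul, conjTranspose_add, conjTranspose_conjTranspose,
    add_comm]
  norm_num

lemma trace_mul_Lstar {Δ : Matrix (Fin m) (Fin m) ℂ} (hΔ : Δ.IsHermitian)
    (lam : Matrix (Fin p) (Fin q) ℂ) :
    (Δ * Lstar Gl Gr lam).trace = ((Lmap Gl Gr Δ * lamᴴ).trace.re : ℂ) := by
  set M := ∑ k, (Gl k)ᴴ * lam * (Gr k)ᴴ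
  have hMH : (Δ * Mᴴ).trace = (Lmap Gl Gr Δ * lamᴴ).trace := by
    simp only [M, Lmap, conjTranspose_sum, conjTranspose_mul, conjTranspose_conjTranspose,
      Matrix.mul_sum, Matrix.sum_mul, trace_sum]
    refine Finset.sum_congr rfl fun k _ => ?_
    rw [← Matrix.mul_assoc, ← Matrix.mul_assoc, trace_mul_comm, ← Matrix.mul_assoc,
      ← Matrix.mul_assoc]
  have hM : (Δ * M).trace = star (Δ * Mᴴ).trace := by
    rw [← trace_conjTranspose, conjTranspose_mul, conjTranspose_conjTranspose, hΔ.eq,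
      trace_mul_comm]
  rw [Lstar, Matrix.mul_smul, trace_smul, Matrix.mul_add, trace_add, hM, hMH, Complex.star_def,
    Complex.re_eq_add_conj]
  ring

end

/-- if `ρ̂ = (1/e) exp (−L*(λ))` for some `λ`, and `L ρ̂ = R`, then `ρ̂` is the
unique minimizer of `ρ ↦ trace (ρ log ρ)` over Hermitian positive definite `ρ` with
`L ρ = R`. -/
theorem unique_minimizer_traceRhoLogRho {N p q m : ℕ}
    (Gl : Fin N → Matrix (Fin p) (Fin m) ℂ) (Gr : Fin N → Matrix (Fin m) (Fin q) ℂ)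
    (R : Matrix (Fin p) (Fin q) ℂ) (lam : Matrix (Fin p) (Fin q) ℂ)
    (ρhat : Matrix (Fin m) (Fin m) ℂ)
    (hform : ρhat = (((Real.exp 1)⁻¹ : ℝ) : ℂ) • exp (-(Lstar Gl Gr lam)))
    (hmatch : Lmap Gl Gr ρhat = R) :
    ∀ ρ : Matrix (Fin m) (Fin m) ℂ, ρ.PosDef → Lmap Gl Gr ρ = R → ρ ≠ ρhat →
      traceRhoLogRho ρhat < traceRhoLogRho ρ := by
  intro ρ hρ hρR hne
  set H := -Lstar Gl Gr lam
  have hH : (H - 1).IsHermitian := (Lstar_isHermitian Gl Gr lam).neg.sub isHermitian_one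
  have hρhat : ρhat = exp (H - 1) := by rw [hform, Matrix.exp_sub_one]
  have hρhatPD : ρhat.PosDef := hρhat ▸ hH.posDef_exp
  have hlog : hρhatPD.isHermitian.cfc Real.log = H - 1 := by
    subst hρhat
    exact hH.cfc_log_exp _
  have htr : (ρ * H).trace = (ρhat * H).trace := by
    have h := trace_mul_Lstar Gl Gr (hρ.isHermitian.sub hρhatPD.isHermitian) lam
    rw [Lmap_sub, hρR, hmatch, sub_self, Matrix.zero_mul, trace_zero, Complex.zero_re,
      Complex.ofReal_zero, Matrix.sub_mul, trace_sub, sub_eq_zero] at h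
    simp [H, h]
  have hklein := hρ.klein_inequality hρhatPD hne
  simp only [traceRhoLogRho, dif_pos hρ.isHermitian, dif_pos hρhatPD.isHermitian, hlog]
    at hklein ⊢
  simp only [Matrix.mul_sub, Matrix.mul_one, trace_sub, Complex.sub_re, RCLike.re_to_complex, htr]
    at hklein ⊢
  linarith
end
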